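/- arXiv:1303.2151 — 3 statements merged into one kernel-verified Lean document; each statement's English description precedes it below -/
import Mathlib

section
/- Let N ≥ 2 be an integer (or real, N > 2 suffices for the statement to be nontrivial) and let x ∈ (2, N). Then there exists a constant c ∈ (0,1) such that for all integers t ≥ 1, 0 < A_t(x)/A_t(N) ≤ (x/N)^{c·t}. -/
/-- The dilated Chebyshev polynomials of the second kind:
`A 0 = 1`, `A 1 = X`, and `A (t+2) = X * A (t+1) - A t`
(equivalently `A 1 * A t = A (t+1) + A (t-1)` for `t ≥ 1`). -/
noncomputable def dilA : ℕ → Polynomial ℝ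
  | 0 => 1
  | 1 => Polynomial.X
  | (t + 2) => Polynomial.X * dilA (t + 1) - dilA t

lemma dilA_eval_rec (t : ℕ) (y : ℝ) :
    (dilA (t+2)).eval y = y * (dilA (t+1)).eval y - (dilA t).eval y := by
  simp [dilA]

lemma dilA_pos_step (y : ℝ) (hy : 2 < y) (t : ℕ) :
    0 < (dilA t).eval y ∧ (y - 1) * (dilA t).eval y ≤ (dilA (t+1)).eval y := by
  induction t with
  | zero => constructor <;> simp [dilA]
  | succ t ih =>
    obtain ⟨hpos, hstep⟩ := ih
    have h1 : 1 < y - 1 := by linarith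
    have hposn : 0 < (dilA (t+1)).eval y := lt_of_lt_of_le (by nlinarith) hstep
    have hmono : (dilA t).eval y ≤ (dilA (t+1)).eval y := by nlinarith
    refine ⟨hposn, ?_⟩
    rw [dilA_eval_rec]
    nlinarith

lemma dilA_pos (y : ℝ) (hy : 2 < y) (t : ℕ) : 0 < (dilA t).eval y :=
  (dilA_pos_step y hy t).1

lemma dilA_key (N x : ℝ) (hx : 2 < x) (hxN : x < N) (t : ℕ) :
    (dilA (t+1)).eval x * (dilA t).eval N * N ≤
      (dilA (t+1)).eval N * (dilA t).eval x * x := by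
  have hN : 2 < N := lt_trans hx hxN
  induction t with
  | zero => simp [dilA]; nlinarith
  | succ t ih =>
    have px := dilA_pos x hx t
    have pN := dilA_pos N hN t
    have px1 := dilA_pos x hx (t+1)
    have pN1 := dilA_pos N hN (t+1)
    rw [dilA_eval_rec, dilA_eval_rec]
    -- need: x * A(t,N) * A(t+1,x) ≤ N * A(t,x) * A(t+1,N), via ih and x < N
    have hih := mul_le_mul_of_nonneg_left ih (le_of_lt (show (0:ℝ) < x by linarith))
    have hsq : 0 ≤ (N - x) * (N + x) * ((dilA (t+1)).eval N * (dilA t).eval x) := by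
      have : 0 < (N - x) * (N + x) := by nlinarith
      positivity
    nlinarith [hih, hsq]

lemma dilA_ratio_pow (N x : ℝ) (hx : 2 < x) (hxN : x < N) (t : ℕ) :
    (dilA t).eval x * N ^ t ≤ (dilA t).eval N * x ^ t := by
  have hN : 2 < N := lt_trans hx hxN
  induction t with
  | zero => simp [dilA]
  | succ t ih =>
    have pN := dilA_pos N hN t
    have px := dilA_pos x hx t
    have pN1 := dilA_pos N hN (t+1)
    have key := dilA_key N x hx hxN t
    have hNt : (0:ℝ) < N ^ t := pow_pos (by linarith) t
    have hxpos : (0:ℝ) < x := by linarith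
    -- multiply key by N^t : A(t+1,x) A(t,N) N^{t+1} ≤ A(t+1,N) A(t,x) x N^t
    have h1 : (dilA (t+1)).eval x * (dilA t).eval N * N ^ (t+1) ≤
        (dilA (t+1)).eval N * ((dilA t).eval x * N ^ t) * x := by
      have := mul_le_mul_of_nonneg_right key (le_of_lt hNt)
      calc (dilA (t+1)).eval x * (dilA t).eval N * N ^ (t+1)
          = (dilA (t+1)).eval x * (dilA t).eval N * N * N ^ t := by ring
        _ ≤ (dilA (t+1)).eval N * (dilA t).eval x * x * N ^ t := this
        _ = (dilA (t+1)).eval N * ((dilA t).eval x * N ^ t) * x := by ring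
    have h2 : (dilA (t+1)).eval N * ((dilA t).eval x * N ^ t) * x ≤
        (dilA (t+1)).eval N * ((dilA t).eval N * x ^ t) * x := by
      have := mul_le_mul_of_nonneg_left ih (le_of_lt pN1)
      exact mul_le_mul_of_nonneg_right this (le_of_lt hxpos)
    have h3 : (dilA (t+1)).eval x * (dilA t).eval N * N ^ (t+1) ≤
        (dilA (t+1)).eval N * x ^ (t+1) * (dilA t).eval N := by
      calc (dilA (t+1)).eval x * (dilA t).eval N * N ^ (t+1)
          ≤ (dilA (t+1)).eval N * ((dilA t).eval N * x ^ t) * x := le_trans h1 h2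
        _ = (dilA (t+1)).eval N * x ^ (t+1) * (dilA t).eval N := by ring
    exact le_of_mul_le_mul_right (by linarith [h3]) pN

theorem dilA_ratio_exp_decay (N x : ℝ) (hx : 2 < x) (hxN : x < N) :
    ∃ c : ℝ, 0 < c ∧ c < 1 ∧ ∀ t : ℕ, 1 ≤ t →
      0 < (dilA t).eval x / (dilA t).eval N ∧
      (dilA t).eval x / (dilA t).eval N ≤ (x / N) ^ (c * t) := by
  have hN : 2 < N := lt_trans hx hxN
  have hNpos : (0:ℝ) < N := by linarith
  have hxpos : (0:ℝ) < x := by linarith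
  have hbase : 0 < x / N := div_pos hxpos hNpos
  have hbase1 : x / N ≤ 1 := le_of_lt ((div_lt_one hNpos).2 hxN)
  refine ⟨1/2, by norm_num, by norm_num, fun t ht => ?_⟩
  have px := dilA_pos x hx t
  have pN := dilA_pos N hN t
  constructor
  · exact div_pos px pN
  · have h1 : (dilA t).eval x / (dilA t).eval N ≤ (x / N) ^ t := by
      rw [div_pow, div_le_div_iff₀ pN (pow_pos hNpos t)]
      linarith [dilA_ratio_pow N x hx hxN t]
    have h2 : (x / N : ℝ) ^ (t : ℝ) ≤ (x / N) ^ ((1/2 : ℝ) * t) := by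
      apply Real.rpow_le_rpow_of_exponent_ge hbase hbase1
      have : (0:ℝ) ≤ (t:ℝ) := Nat.cast_nonneg t
      linarith
    calc (dilA t).eval x / (dilA t).eval N ≤ (x / N) ^ t := h1
      _ = (x / N : ℝ) ^ (t : ℝ) := (Real.rpow_natCast _ t).symm
      _ ≤ (x / N) ^ ((1/2 : ℝ) * t) := h2
end

section
/- For every real x ∈ (2, N) with N > 2, there exists t₀ ∈ ℕ such that for all t ≥ t₀, A_t(x)/A_t(N) ≤ (x/N)^t. -/
/-!
Writing `x = y + y⁻¹` with `y > 1`, one has `A_t(x) = (y^(t+1) - y^(-(t+1))) / (y - y⁻¹)`, so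
`A_t(x)` grows like a constant times `y^t`. Hence `A_t(x) / A_t(N)` is at most a constant times
`(y_x / y_N)^t`, and `y_x / y_N < x / N` because `y_x / x = (1 + √(1 - 4 / x²)) / 2` increases
with `x`.
A geometric sequence of smaller ratio eventually beats any constant.
-/

open Filter Polynomial

theorem dilA_eval_add_mul_sub {y u : ℝ} (hyu : y * u = 1) (t : ℕ) :
    (dilA t).eval (y + u) * (y - u) = y ^ (t + 1) - u ^ (t + 1) := by
  induction t using Nat.twoStepInduction with
  | zero => simp [dilA]
  | one => simp [dilA]; ring
  | more t ih₁ ih₂ =>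
    simp only [dilA, eval_sub, eval_mul, eval_X]
    linear_combination (y + u) * ih₂ - ih₁ + (y ^ (t + 1) - u ^ (t + 1)) * hyu

theorem dilA_eval_add_le {y u : ℝ} (hyu : y * u = 1) (hu : 0 ≤ u) (huy : u < y) (t : ℕ) :
    (dilA t).eval (y + u) ≤ y ^ (t + 1) / (y - u) := by
  rw [le_div_iff₀ (sub_pos.2 huy), dilA_eval_add_mul_sub hyu]
  linarith [pow_nonneg hu (t + 1)]

theorem pow_le_dilA_eval_add {y u : ℝ} (hyu : y * u = 1) (hu : 0 ≤ u) (huy : u < y) (t : ℕ) :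
    y ^ t ≤ (dilA t).eval (y + u) := by
  have hut : u ^ t ≤ y ^ t := pow_le_pow_left₀ hu huy.le t
  rw [← mul_le_mul_iff_of_pos_right (sub_pos.2 huy), dilA_eval_add_mul_sub hyu]
  nlinarith [pow_succ y t, pow_succ u t]

/-- The larger root of `z² - x z + 1`, so that `x = y + y⁻¹` for `y = dilRoot x`. -/
noncomputable def dilRoot (x : ℝ) : ℝ := (x + √(x ^ 2 - 4)) / 2

section dilRoot

variable {x : ℝ}

theorem dilRoot_pos (hx : 0 < x) : 0 < dilRoot x := by
  unfold dilRoot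
  positivity

theorem dilRoot_mul_sub (hx : 2 ≤ x) : dilRoot x * (x - dilRoot x) = 1 := by
  have hs : √(x ^ 2 - 4) ^ 2 = x ^ 2 - 4 := Real.sq_sqrt (by nlinarith)
  unfold dilRoot
  linear_combination -hs / 4

theorem sub_dilRoot_nonneg (hx : 2 ≤ x) : 0 ≤ x - dilRoot x := by
  have hs : √(x ^ 2 - 4) ≤ x :=
    Real.sqrt_le_iff.2 ⟨by linarith, by nlinarith⟩
  unfold dilRoot
  linarith

theorem sub_dilRoot_lt_dilRoot (hx : 2 < x) : x - dilRoot x < dilRoot x := by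
  have hs : 0 < √(x ^ 2 - 4) := Real.sqrt_pos.2 (by nlinarith)
  unfold dilRoot
  linarith

theorem dilRoot_div_lt_dilRoot_div {N : ℝ} (hx : 2 ≤ x) (hxN : x < N) :
    dilRoot x / dilRoot N < x / N := by
  have hN : 2 < N := hx.trans_lt hxN
  have hsx : √(x ^ 2 - 4) ^ 2 = x ^ 2 - 4 := Real.sq_sqrt (by nlinarith)
  have hsN : √(N ^ 2 - 4) ^ 2 = N ^ 2 - 4 := Real.sq_sqrt (by nlinarith)
  have key : N * √(x ^ 2 - 4) < x * √(N ^ 2 - 4) :=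
    lt_of_pow_lt_pow_left₀ 2 (by positivity) (by rw [mul_pow, mul_pow, hsx, hsN]; nlinarith)
  rw [div_lt_div_iff₀ (dilRoot_pos (by linarith)) (by linarith)]
  unfold dilRoot
  linarith

theorem dilA_eval_div_le {N : ℝ} (hx : 2 < x) (hN : 2 < N) (t : ℕ) :
    (dilA t).eval x / (dilA t).eval N ≤
      dilRoot x / (dilRoot x - (x - dilRoot x)) * (dilRoot x / dilRoot N) ^ t := by
  have hupper := dilA_eval_add_le (dilRoot_mul_sub hx.le) (sub_dilRoot_nonneg hx.le)
    (sub_dilRoot_lt_dilRoot hx) t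
  have hlower := pow_le_dilA_eval_add (dilRoot_mul_sub hN.le) (sub_dilRoot_nonneg hN.le)
    (sub_dilRoot_lt_dilRoot hN) t
  rw [add_sub_cancel] at hupper hlower
  have hgap : 0 < dilRoot x - (x - dilRoot x) := sub_pos.2 (sub_dilRoot_lt_dilRoot hx)
  have hypos := dilRoot_pos (by linarith : 0 < x)
  have hzpos := dilRoot_pos (by linarith : 0 < N)
  calc (dilA t).eval x / (dilA t).eval N
      ≤ dilRoot x ^ (t + 1) / (dilRoot x - (x - dilRoot x)) / dilRoot N ^ t :=
        div_le_div₀ (div_nonneg (by positivity) hgap.le) hupper (by positivity) hlower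
    _ = _ := by rw [div_pow, pow_succ]; ring

end dilRoot

theorem eventually_mul_pow_le_pow (C : ℝ) {q r : ℝ} (hq : 0 ≤ q) (hqr : q < r) :
    ∀ᶠ t : ℕ in atTop, C * q ^ t ≤ r ^ t := by
  filter_upwards [((isLittleO_pow_pow_of_lt_left hq hqr).const_mul_left C).bound one_pos]
    with t ht
  rw [one_mul, Real.norm_of_nonneg (pow_nonneg (hq.trans hqr.le) t)] at ht
  exact (le_abs_self _).trans ht

theorem dilA_ratio_eventually_le (N x : ℝ) (hN : 2 < N) (hx : 2 < x) (hxN : x < N) :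
    ∃ t₀ : ℕ, ∀ t : ℕ, t₀ ≤ t →
      (dilA t).eval x / (dilA t).eval N ≤ (x / N) ^ t := by
  have hroot_pos : 0 ≤ dilRoot x / dilRoot N :=
    (div_pos (dilRoot_pos (by linarith)) (dilRoot_pos (by linarith))).le
  obtain ⟨t₀, ht₀⟩ := eventually_atTop.1 <|
    eventually_mul_pow_le_pow _ hroot_pos (dilRoot_div_lt_dilRoot_div hx.le hxN)
  exact ⟨t₀, fun t ht => (dilA_eval_div_le hx hN t).trans (ht₀ t ht)⟩
end

section
/- The polynomials Π_t defined by Π_0 = 1, Π_1 = X − 1, and Π_1 · Π_t = Π_{t+1} + Π_t + Π_{t−1} for t ≥ 1, satisfy Π_t(x) = A_{2t}(√x) for all x ≥ 0 and t ∈ ℕ, where A_t are the dilated Chebyshev polynomials of the second kind. -/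
/-- The polynomials $\Pi_t$: $\Pi_0 = 1$, $\Pi_1 = X - 1$, and
$\Pi_1 \Pi_t = \Pi_{t+1} + \Pi_t + \Pi_{t-1}$ for $t \ge 1$. -/
noncomputable def PiPol : ℕ → Polynomial ℝ
  | 0 => 1
  | 1 => Polynomial.X - 1
  | (t + 2) => (Polynomial.X - 1) * PiPol (t + 1) - PiPol (t + 1) - PiPol t

lemma dilA_add_four (m : ℕ) (s : ℝ) :
    (dilA (m + 4)).eval s = (s ^ 2 - 2) * (dilA (m + 2)).eval s - (dilA m).eval s := by
  have h3 : dilA (m + 4) = Polynomial.X * dilA (m + 3) - dilA (m + 2) := rfl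
  have h2 : dilA (m + 3) = Polynomial.X * dilA (m + 2) - dilA (m + 1) := rfl
  have h1 : dilA (m + 2) = Polynomial.X * dilA (m + 1) - dilA m := rfl
  have he : (dilA (m + 2)).eval s = s * (dilA (m + 1)).eval s - (dilA m).eval s := by
    rw [h1]; simp
  rw [h3, h2]
  simp only [Polynomial.eval_sub, Polynomial.eval_mul, Polynomial.eval_X]
  nlinarith [he]

theorem PiPol_eq_dilA (t : ℕ) (x : ℝ) (hx : 0 ≤ x) :
    (PiPol t).eval x = (dilA (2 * t)).eval (Real.sqrt x) := by
  have hs : Real.sqrt x ^ 2 = x := Real.sq_sqrt hx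
  induction t using Nat.twoStepInduction with
  | zero => simp [PiPol, dilA]
  | one =>
    show (Polynomial.X - 1 : Polynomial ℝ).eval x = (dilA 2).eval (Real.sqrt x)
    have : dilA 2 = Polynomial.X * Polynomial.X - 1 := by rfl
    rw [this]
    simp only [Polynomial.eval_sub, Polynomial.eval_mul, Polynomial.eval_X,
      Polynomial.eval_one]
    nlinarith [hs]
  | more n ih1 ih2 =>
    have hrec : PiPol (n + 2) =
        (Polynomial.X - 1) * PiPol (n + 1) - PiPol (n + 1) - PiPol n := rfl
    have hA : 2 * (n + 2) = 2 * n + 4 := by ring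
    have hA1 : 2 * (n + 1) = 2 * n + 2 := by ring
    rw [hrec, hA, dilA_add_four, ← hA1, ← ih2, ← ih1]
    simp only [Polynomial.eval_sub, Polynomial.eval_mul, Polynomial.eval_X,
      Polynomial.eval_one]
    rw [hs]; ring
end
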